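/- Let C be a set of permutations in S_n with pairwise Hamming distance at least 2k+1, and for x ∈ S_n let B_i(x) be the number of codewords of C at Hamming distance exactly i from x. Then for every x ∈ S_n: A(n,2k,k+1)·Σ_{i<k} B_i(x) + (A(n,2k,k+1) − A(n−k,2k,k+1))·B_k(x) + B_{k+1}(x) ≤ A(n,2k,k+1), for 2 ≤ k ≤ ⌊(n−k−1)/2⌋. -/

import Mathlib

open Finset

/-- Hamming distance between two permutations of `Fin n`. -/
def permDist {n : ℕ} (x y : Equiv.Perm (Fin n)) : ℕ :=
  (Finset.univ.filter fun i => x i ≠ y i).card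

/-- Weight of a permutation: number of non-fixed points. -/
def permWeight {n : ℕ} (x : Equiv.Perm (Fin n)) : ℕ :=
  (Finset.univ.filter fun i => x i ≠ i).card

/-- `C` is an `(n,d)` permutation array: pairwise Hamming distance at least `d`. -/
def isPA {n : ℕ} (C : Finset (Equiv.Perm (Fin n))) (d : ℕ) : Prop :=
  ∀ x ∈ C, ∀ y ∈ C, x ≠ y → d ≤ permDist x y

/-- `P n d`: maximum size of an `(n,d)` permutation array. -/
noncomputable def P (n d : ℕ) : ℕ :=
  sSup {m | ∃ C : Finset (Equiv.Perm (Fin n)), isPA C d ∧ C.card = m}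

/-- `Pw n d w`: maximum size of an `(n,d,w)` constant-weight permutation array. -/
noncomputable def Pw (n d w : ℕ) : ℕ :=
  sSup {m | ∃ C : Finset (Equiv.Perm (Fin n)), isPA C d ∧ (∀ x ∈ C, permWeight x = w) ∧ C.card = m}

/-- `A n d w`: maximum size of a binary constant-weight code of length `n`,
minimum distance `d`, weight `w` (codewords as supports). -/
noncomputable def A (n d w : ℕ) : ℕ :=
  sSup {m | ∃ C : Finset (Finset (Fin n)), (∀ s ∈ C, s.card = w) ∧
    (∀ s ∈ C, ∀ t ∈ C, s ≠ t → d ≤ (symmDiff s t).card) ∧ C.card = m}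

/-- Volume of a Hamming ball of radius `r` in `S_n`. -/
def V (n r : ℕ) : ℕ := ∑ i ∈ Finset.range (r + 1), n.choose i * numDerangements i

section Aux

variable {α β : Type*} [DecidableEq α] [DecidableEq β]

lemma aux_image_symmDiff {f : α → β} {s t : Finset α}
    (h : Set.InjOn f (↑(s ∪ t) : Set α)) :
    symmDiff (s.image f) (t.image f) = (symmDiff s t).image f := by
  ext b
  simp only [mem_symmDiff, mem_image]
  constructor
  · rintro (⟨⟨a, ha, rfl⟩, hb⟩ | ⟨⟨a, ha, rfl⟩, hb⟩)
    · exact ⟨a, Or.inl ⟨ha, fun hat => hb ⟨a, hat, rfl⟩⟩, rfl⟩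
    · exact ⟨a, Or.inr ⟨ha, fun hat => hb ⟨a, hat, rfl⟩⟩, rfl⟩
  · rintro ⟨a, (⟨has, hat⟩ | ⟨hat, has⟩), rfl⟩
    · refine Or.inl ⟨⟨a, has, rfl⟩, ?_⟩
      rintro ⟨a', ha', he⟩
      exact hat (h (by simp [ha']) (by simp [has]) he ▸ ha')
    · refine Or.inr ⟨⟨a, hat, rfl⟩, ?_⟩
      rintro ⟨a', ha', he⟩
      exact has (h (by simp [ha']) (by simp [hat]) he ▸ ha')

lemma aux_card_symmDiff_image {f : α → β} {s t : Finset α}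
    (h : Set.InjOn f (↑(s ∪ t) : Set α)) :
    (symmDiff (s.image f) (t.image f)).card = (symmDiff s t).card := by
  rw [aux_image_symmDiff h]
  apply card_image_of_injOn
  refine h.mono ?_
  intro a ha
  simp only [mem_coe, mem_symmDiff] at ha
  simp only [coe_union, Set.mem_union, mem_coe]
  tauto

lemma aux_card_symmDiff (s t : Finset α) :
    (symmDiff s t).card + (s ∩ t).card = (s ∪ t).card := by
  rw [symmDiff_eq_sup_sdiff_inf]
  show ((s ∪ t) \ (s ∩ t)).card + _ = _
  rw [card_sdiff_of_subset (inter_subset_union)]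
  have := card_le_card (inter_subset_union (s := s) (t := t))
  omega

lemma permDist_comm {n : ℕ} (x y : Equiv.Perm (Fin n)) : permDist x y = permDist y x := by
  unfold permDist
  congr 1
  ext i
  simp [ne_comm]

lemma permDist_triangle {n : ℕ} (a b c : Equiv.Perm (Fin n)) :
    permDist a c ≤ permDist a b + permDist b c := by
  unfold permDist
  calc (Finset.univ.filter fun i => a i ≠ c i).card
      ≤ ((Finset.univ.filter fun i => a i ≠ b i) ∪
          (Finset.univ.filter fun i => b i ≠ c i)).card := by
        apply card_le_card
        intro i hi
        simp only [mem_filter, mem_union, mem_univ, true_and] at hi ⊢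
        by_contra h
        push_neg at h
        exact hi (h.1.trans h.2)
    _ ≤ _ := card_union_le _ _

/-- The set of positions where `c` differs from `x`. -/
def diffSet {n : ℕ} (c x : Equiv.Perm (Fin n)) : Finset (Fin n) :=
  Finset.univ.filter fun i => c i ≠ x i

lemma diffSet_card {n : ℕ} (c x : Equiv.Perm (Fin n)) : (diffSet c x).card = permDist c x := rfl

lemma permDist_le_card_union {n : ℕ} (c₁ c₂ x : Equiv.Perm (Fin n)) :
    permDist c₁ c₂ ≤ (diffSet c₁ x ∪ diffSet c₂ x).card := by
  apply card_le_card
  intro i hi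
  simp only [permDist, diffSet, mem_filter, mem_union, mem_univ, true_and] at hi ⊢
  by_contra h
  push_neg at h
  exact hi (h.1.trans h.2.symm)

lemma le_A {m d w : ℕ} (F : Finset (Finset (Fin m))) (h1 : ∀ s ∈ F, s.card = w)
    (h2 : ∀ s ∈ F, ∀ t ∈ F, s ≠ t → d ≤ (symmDiff s t).card) : F.card ≤ A m d w := by
  apply le_csSup
  · refine ⟨Fintype.card (Finset (Fin m)), ?_⟩
    rintro y ⟨C, -, -, rfl⟩
    exact card_le_univ C
  · exact ⟨F, h1, h2, rfl⟩

/-- Two distinct codewords at distance `k+1` from `x` have diff-sets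
with symmetric difference at least `2k`. -/
lemma sd_lower {n k : ℕ} {C : Finset (Equiv.Perm (Fin n))} (hC : isPA C (2 * k + 1))
    {x c₁ c₂ : Equiv.Perm (Fin n)} (h₁ : c₁ ∈ C) (h₂ : c₂ ∈ C) (hne : c₁ ≠ c₂)
    (hd₁ : permDist c₁ x = k + 1) (hd₂ : permDist c₂ x = k + 1) :
    2 * k ≤ (symmDiff (diffSet c₁ x) (diffSet c₂ x)).card := by
  have hdist := hC c₁ h₁ c₂ h₂ hne
  have hle := permDist_le_card_union c₁ c₂ x
  have hsd := aux_card_symmDiff (diffSet c₁ x) (diffSet c₂ x)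
  have hui := card_union_add_card_inter (diffSet c₁ x) (diffSet c₂ x)
  rw [diffSet_card, diffSet_card, hd₁, hd₂] at hui
  omega

/-- Bound on the number of codewords at distance `k+1` from `x`, given an injection
of all their diff-sets into `Fin m`. -/
lemma family_bound {n k : ℕ} (hk : 1 ≤ k) {C : Finset (Equiv.Perm (Fin n))}
    (hC : isPA C (2 * k + 1)) (x : Equiv.Perm (Fin n)) {m : ℕ} (g : Fin n → Fin m)
    (S : Finset (Fin n)) (ginj : Set.InjOn g ↑S)
    (hsub : ∀ c ∈ C, permDist c x = k + 1 → diffSet c x ⊆ S) :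
    (C.filter fun c => permDist c x = k + 1).card ≤ A m (2 * k) (k + 1) := by
  set T := C.filter fun c => permDist c x = k + 1 with hT
  have hmemT : ∀ c ∈ T, c ∈ C ∧ permDist c x = k + 1 := by
    intro c hc; rw [hT, mem_filter] at hc; exact hc
  have hsd : ∀ c₁ ∈ T, ∀ c₂ ∈ T, c₁ ≠ c₂ →
      2 * k ≤ (symmDiff ((diffSet c₁ x).image g) ((diffSet c₂ x).image g)).card := by
    intro c₁ h₁ c₂ h₂ hne
    obtain ⟨h₁C, h₁d⟩ := hmemT c₁ h₁
    obtain ⟨h₂C, h₂d⟩ := hmemT c₂ h₂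
    rw [aux_card_symmDiff_image (ginj.mono ?_)]
    · exact sd_lower hC h₁C h₂C hne h₁d h₂d
    · intro a ha
      simp only [coe_union, Set.mem_union, mem_coe] at ha
      rcases ha with ha | ha
      · exact hsub c₁ h₁C h₁d ha
      · exact hsub c₂ h₂C h₂d ha
  have hinj : Set.InjOn (fun c => (diffSet c x).image g) ↑T := by
    intro c₁ h₁ c₂ h₂ he
    by_contra hne
    have := hsd c₁ h₁ c₂ h₂ hne
    simp only at he
    rw [he, symmDiff_self] at this
    simp only [Finset.bot_eq_empty, card_empty] at this
    omega
  rw [← card_image_of_injOn hinj]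
  apply le_A
  · intro s hs
    rw [mem_image] at hs
    obtain ⟨c, hc, rfl⟩ := hs
    obtain ⟨hcC, hcd⟩ := hmemT c hc
    rw [card_image_of_injOn (ginj.mono (by exact_mod_cast hsub c hcC hcd)), diffSet_card, hcd]
  · intro s hs t ht hne
    rw [mem_image] at hs ht
    obtain ⟨c₁, h₁, rfl⟩ := hs
    obtain ⟨c₂, h₂, rfl⟩ := ht
    exact hsd c₁ h₁ c₂ h₂ (fun h => hne (by rw [h]))

end Aux

theorem stmt13 (n k : ℕ) (hk : 2 ≤ k) (hkn : k ≤ (n - k - 1) / 2)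
    (C : Finset (Equiv.Perm (Fin n))) (hC : isPA C (2 * k + 1))
    (x : Equiv.Perm (Fin n)) :
    A n (2 * k) (k + 1) * (∑ i ∈ Finset.range k, (C.filter fun c => permDist c x = i).card)
      + (A n (2 * k) (k + 1) - A (n - k) (2 * k) (k + 1))
        * (C.filter fun c => permDist c x = k).card
      + (C.filter fun c => permDist c x = k + 1).card
      ≤ A n (2 * k) (k + 1) := by
  -- codewords close to x are unique
  have huniq : ∀ c₁ ∈ C, ∀ c₂ ∈ C, permDist c₁ x + permDist c₂ x ≤ 2 * k → c₁ = c₂ := by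
    intro c₁ h₁ c₂ h₂ hsum
    by_contra hne
    have h := hC c₁ h₁ c₂ h₂ hne
    have ht := permDist_triangle c₁ x c₂
    rw [permDist_comm x c₂] at ht
    omega
  -- rewrite the sum as a single cardinality
  have hsum : (∑ i ∈ Finset.range k, (C.filter fun c => permDist c x = i).card)
      = (C.filter fun c => permDist c x < k).card := by
    rw [card_eq_sum_card_fiberwise (f := fun c => permDist c x) (t := Finset.range k)
      (fun c hc => by rw [mem_coe, mem_filter] at hc; exact mem_coe.2 (mem_range.2 hc.2))]
    apply Finset.sum_congr rfl
    intro i hi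
    rw [mem_range] at hi
    congr 1
    rw [filter_filter]
    apply filter_congr
    intro c _
    constructor
    · intro h; exact ⟨h ▸ hi, h⟩
    · exact fun h => h.2
  -- the number at distance exactly k+1 is at most A n (2k) (k+1)
  have hcA : (C.filter fun c => permDist c x = k + 1).card ≤ A n (2 * k) (k + 1) := by
    apply family_bound (by omega) hC x id Finset.univ (Function.injective_id.injOn)
    intro c _ _
    exact subset_univ _
  by_cases hclose : ∃ c₀ ∈ C, permDist c₀ x < k
  · obtain ⟨c₀, hc₀C, hc₀⟩ := hclose
    have hek : (C.filter fun c => permDist c x = k) = ∅ := by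
      rw [filter_eq_empty_iff]
      intro c hcC hcd
      have hcc := huniq c₀ hc₀C c hcC (by omega)
      rw [hcc] at hc₀
      omega
    have hek1 : (C.filter fun c => permDist c x = k + 1) = ∅ := by
      rw [filter_eq_empty_iff]
      intro c hcC hcd
      have hcc := huniq c₀ hc₀C c hcC (by omega)
      rw [hcc] at hc₀
      omega
    have hle1 : (C.filter fun c => permDist c x < k).card ≤ 1 := by
      rw [card_le_one]
      intro c₁ h₁ c₂ h₂
      rw [mem_filter] at h₁ h₂
      exact huniq c₁ h₁.1 c₂ h₂.1 (by omega)
    rw [hsum, hek, hek1]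
    simp only [card_empty, Nat.mul_zero, Nat.add_zero]
    calc A n (2 * k) (k + 1) * (C.filter fun c => permDist c x < k).card
        ≤ A n (2 * k) (k + 1) * 1 := Nat.mul_le_mul_left _ hle1
      _ = _ := Nat.mul_one _
  · push_neg at hclose
    have hempty : (C.filter fun c => permDist c x < k) = ∅ := by
      rw [filter_eq_empty_iff]
      intro c hcC hcd
      exact absurd hcd (by simpa using hclose c hcC)
    rw [hsum, hempty]
    simp only [card_empty, Nat.mul_zero, Nat.zero_add]
    by_cases hmid : ∃ c₀ ∈ C, permDist c₀ x = k
    · obtain ⟨c₀, hc₀C, hc₀⟩ := hmid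
      have hb1 : (C.filter fun c => permDist c x = k).card = 1 := by
        rw [card_eq_one]
        refine ⟨c₀, ?_⟩
        apply eq_singleton_iff_unique_mem.2
        refine ⟨mem_filter.2 ⟨hc₀C, hc₀⟩, ?_⟩
        intro c hc
        rw [mem_filter] at hc
        exact huniq c hc.1 c₀ hc₀C (by omega)
      -- build the injection into Fin (n - k)
      have hnk : 2 * k ≤ n - k - 1 := by
        have h2 : (0:ℕ) < 2 := by norm_num
        exact (Nat.le_div_iff_mul_le h2).1 hkn |>.trans_eq' (by ring_nf)
      have hnkpos : 0 < n - k := by omega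
      have hnn : n - k ≤ n := Nat.sub_le _ _
      set D₀ := diffSet c₀ x with hD₀
      have hD₀card : D₀.card = k := by rw [hD₀, diffSet_card, hc₀]
      set S := D₀ᶜ with hS
      have hn : k ≤ n := by
        have := card_le_univ D₀
        simpa [hD₀card] using this
      have hScard : S.card = n - k := by
        rw [hS, card_compl, hD₀card]
        simp
      have e : {a // a ∈ S} ≃ Fin (n - k) :=
        Fintype.equivFinOfCardEq (by rw [Fintype.card_coe, hScard])
      set g : Fin n → Fin (n - k) := fun i => if h : i ∈ S then e ⟨i, h⟩ else ⟨0, hnkpos⟩ with hg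
      have ginj : Set.InjOn g ↑S := by
        intro i hi j hj hij
        rw [mem_coe] at hi hj
        rw [hg] at hij
        simp only [dif_pos hi, dif_pos hj] at hij
        have := e.injective hij
        exact Subtype.ext_iff.1 this
      have hsub : ∀ c ∈ C, permDist c x = k + 1 → diffSet c x ⊆ S := by
        intro c hcC hcd
        have hne : c ≠ c₀ := by intro h; rw [h, hc₀] at hcd; omega
        have hdist := hC c hcC c₀ hc₀C hne
        have hle := permDist_le_card_union c c₀ x
        have hui := card_union_add_card_inter (diffSet c x) (diffSet c₀ x)
        rw [diffSet_card, diffSet_card, hcd, hc₀] at hui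
        have hint : (diffSet c x ∩ D₀).card = 0 := by rw [hD₀]; omega
        rw [card_eq_zero] at hint
        intro i hi
        rw [hS, mem_compl]
        intro hiD
        have : i ∈ diffSet c x ∩ D₀ := mem_inter.2 ⟨hi, hiD⟩
        rw [hint] at this
        exact absurd this (notMem_empty i)
      have hcA1 : (C.filter fun c => permDist c x = k + 1).card ≤ A (n - k) (2 * k) (k + 1) :=
        family_bound (by omega) hC x g S ginj hsub
      rw [hb1, Nat.mul_one]
      omega
    · push_neg at hmid
      have hbe : (C.filter fun c => permDist c x = k) = ∅ := by
        rw [filter_eq_empty_iff]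
        intro c hcC
        exact hmid c hcC
      rw [hbe]
      simpa using hcA
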